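/- arXiv:0905.3486 — 3 statements merged into one kernel-verified Lean document; each statement's English description precedes it below -/
import Mathlib

section
/- Let T be an ergodic measure preserving transformation of a σ-finite standard measure space (X,μ) with orbit equivalence relation R, K a compact abelian group with a continuous automorphism v, α: R → K a cocycle, and S an invertible measure preserving transformation commuting with T. If the cocycle α∘S (defined by (α∘S)(x,y) = α(Sx,Sy)) is cohomologous to v∘α, then for every character χ of K and every i ∈ ℤ, the weighted Koopman operators U_{T,χ} and U_{T, χ∘v^i} are unitarily equivalent, where U_{T,χ}f(x) = χ(α(Tx,x)) f(Tx) on L²(X,μ). -/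
/-!
Because `S` commutes with `T` and `α (S x, S y) = φ x + v (α (x, y)) - φ y` along `T`-orbits,
the unitary `f ↦ χ (φ x) • f (S x)` conjugates `U_{T,χ}` to `U_{T,χ∘v}`. Applied to the
characters `χ ∘ v^j`, together with symmetry and transitivity of conjugacy in the group of
unitaries, this makes `U_{T,χ}` conjugate to `U_{T,χ∘v^i}` for every `i ∈ ℤ`. All operators
involved are weighted composition operators `f ↦ w • (f ∘ e)`, and these compose by composing
the maps and multiplying the weights.
-/

open MeasureTheory
open scoped ENNReal

noncomputable instance : MeasurableSpace Circle := borel Circle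
instance : BorelSpace Circle := ⟨rfl⟩

/-- The underlying (a.e. defined) function of an element of `L²`. -/
noncomputable def lpFun {α : Type*} [MeasurableSpace α] {μ : MeasureTheory.Measure α}
    (f : MeasureTheory.Lp ℂ 2 μ) : α → ℂ := ↑↑f

section WeightedComposition

variable {α β γ E : Type*} [MeasurableSpace α] [MeasurableSpace β] [MeasurableSpace γ]
  {μ : Measure α} {ν : Measure β} {η : Measure γ}
  [NormedAddCommGroup E] [NormedSpace ℂ E] {p : ℝ≥0∞}

theorem MeasureTheory.MemLp.circle_smul_comp {f : β → E} (hf : MemLp f p ν) {e : α → β}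
    (he : MeasurePreserving e μ ν) {w : α → Circle} (hw : Measurable fun x => (w x : ℂ)) :
    MemLp (fun x => (w x : ℂ) • f (e x)) p μ :=
  (hf.comp_measurePreserving he).congr_norm
    (hw.aestronglyMeasurable.smul (hf.comp_measurePreserving he).1)
    (.of_forall fun x => by simp [norm_smul, Circle.norm_coe])

variable [Fact (1 ≤ p)]

noncomputable def weightedComp (e : α → β) (he : MeasurePreserving e μ ν) (w : α → Circle)
    (hw : Measurable fun x => (w x : ℂ)) : Lp E p ν →ₗᵢ[ℂ] Lp E p μ where
  toFun f := ((Lp.memLp f).circle_smul_comp he hw).toLp _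
  map_add' f g := by
    rw [← MemLp.toLp_add]
    refine MemLp.toLp_congr _ _ ?_
    filter_upwards [he.quasiMeasurePreserving.ae (Lp.coeFn_add f g)] with x hx
    rw [Pi.add_apply, hx, Pi.add_apply, smul_add]
  map_smul' c f := by
    rw [← MemLp.toLp_const_smul]
    refine MemLp.toLp_congr _ _ ?_
    filter_upwards [he.quasiMeasurePreserving.ae (Lp.coeFn_smul c f)] with x hx
    rw [Pi.smul_apply, hx, Pi.smul_apply, smul_comm]
    rfl
  norm_map' f := by
    rw [LinearMap.coe_mk, AddHom.coe_mk, Lp.norm_toLp, Lp.norm_def,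
      eLpNorm_congr_norm_ae (g := f ∘ e)
        (.of_forall fun x => by simp [norm_smul, Circle.norm_coe]),
      eLpNorm_comp_measurePreserving (Lp.aestronglyMeasurable f) he]

variable {e : α → β} {he : MeasurePreserving e μ ν} {w : α → Circle}
  {hw : Measurable fun x => (w x : ℂ)}

theorem coeFn_weightedComp (f : Lp E p ν) :
    weightedComp e he w hw f =ᵐ[μ] fun x => (w x : ℂ) • f (e x) :=
  MemLp.coeFn_toLp ((Lp.memLp f).circle_smul_comp he hw)

theorem coeFn_weightedComp_weightedComp {e' : β → γ} {he' : MeasurePreserving e' ν η}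
    {w' : β → Circle} {hw' : Measurable fun x => (w' x : ℂ)} (f : Lp E p η) :
    weightedComp e he w hw (weightedComp e' he' w' hw' f) =ᵐ[μ]
      fun x => ((w x * w' (e x) : Circle) : ℂ) • f (e' (e x)) := by
  filter_upwards [coeFn_weightedComp (he := he) (hw := hw) (weightedComp e' he' w' hw' f),
    he.quasiMeasurePreserving.ae (coeFn_weightedComp (he := he') (hw := hw') f)] with x h₁ h₂
  rw [h₁, h₂, smul_smul, Circle.coe_mul]

section Invertible

variable (e : α ≃ᵐ β) (he : MeasurePreserving e μ ν) {w : α → Circle}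

theorem measurable_coe_inv_comp_symm (hw : Measurable fun x => (w x : ℂ)) :
    Measurable fun y => (((w (e.symm y))⁻¹ : Circle) : ℂ) := by
  simp only [Circle.coe_inv]
  exact (hw.comp e.symm.measurable).inv

theorem weightedComp_weightedComp_symm (hw : Measurable fun x => (w x : ℂ)) (f : Lp E p μ) :
    weightedComp e he w hw (weightedComp e.symm (he.symm e) (fun y => (w (e.symm y))⁻¹)
      (measurable_coe_inv_comp_symm e hw) f) = f := by
  refine Lp.ext ?_
  filter_upwards [coeFn_weightedComp_weightedComp (he := he) (hw := hw) (he' := he.symm e)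
    (hw' := measurable_coe_inv_comp_symm e hw) f] with x hx
  simp [hx]

noncomputable def weightedCompEquiv (hw : Measurable fun x => (w x : ℂ)) :
    Lp E p ν ≃ₗᵢ[ℂ] Lp E p μ :=
  .ofSurjective (weightedComp e he w hw) fun f => ⟨_, weightedComp_weightedComp_symm e he hw f⟩

@[simp]
theorem weightedCompEquiv_apply (hw : Measurable fun x => (w x : ℂ)) (f : Lp E p ν) :
    weightedCompEquiv e he hw f = weightedComp e he w hw f :=
  rfl

theorem eq_weightedCompEquiv_of_ae (hw : Measurable fun x => (w x : ℂ))
    {U : Lp E p ν ≃ₗᵢ[ℂ] Lp E p μ} (h : ∀ f, U f =ᵐ[μ] fun x => (w x : ℂ) • f (e x)) :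
    U = weightedCompEquiv e he hw :=
  LinearIsometryEquiv.ext fun f =>
    Lp.ext ((h f).trans (coeFn_weightedComp (he := he) (hw := hw) f).symm)

end Invertible

theorem isConj_weightedCompEquiv {T S : α ≃ᵐ α} {hT : MeasurePreserving T μ μ}
    {hS : MeasurePreserving S μ μ} (hST : ∀ x, S (T x) = T (S x)) {w w' u : α → Circle}
    {hw : Measurable fun x => (w x : ℂ)} {hw' : Measurable fun x => (w' x : ℂ)}
    {hu : Measurable fun x => (u x : ℂ)} (h : ∀ᵐ x ∂μ, u x * w (S x) = w' x * u (T x)) :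
    IsConj (weightedCompEquiv T hT hw : Lp E p μ ≃ₗᵢ[ℂ] Lp E p μ)
      (weightedCompEquiv T hT hw') := by
  refine ⟨toUnits (weightedCompEquiv S hS hu), LinearIsometryEquiv.ext fun f => Lp.ext ?_⟩
  filter_upwards
    [coeFn_weightedComp_weightedComp (he := hS) (hw := hu) (he' := hT) (hw' := hw) f,
    coeFn_weightedComp_weightedComp (he := hT) (hw := hw') (he' := hS) (hw' := hu) f, h]
    with x h₁ h₂ hx
  simp only [val_toUnits_apply, LinearIsometryEquiv.coe_mul, Function.comp_apply,
    weightedCompEquiv_apply]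
  rw [h₁, h₂, hx, hST]

end WeightedComposition

theorem AddAut.continuous_zsmul {K : Type*} [AddGroup K] [TopologicalSpace K] {v : AddAut K}
    (hv : Continuous v) (hv' : Continuous v.symm) (j : ℤ) : Continuous (j • v) := by
  induction j using Int.induction_on with
  | zero => simpa using continuous_id
  | succ k ih =>
    rw [add_zsmul, one_zsmul, AddAut.coe_add]
    exact ih.comp hv
  | pred k ih =>
    rw [sub_zsmul, one_zsmul, AddAut.coe_add, AddAut.coe_neg]
    exact ih.comp hv'

theorem LinearIsometryEquiv.exists_apply_eq_of_isConj {R E : Type*} [Semiring R]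
    [SeminormedAddCommGroup E] [Module R E] {U V : E ≃ₗᵢ[R] E} (h : IsConj U V) :
    ∃ W : E ≃ₗᵢ[R] E, ∀ f, W (U f) = V (W f) :=
  let ⟨c, hc⟩ := h
  ⟨c, LinearIsometryEquiv.ext_iff.1 hc⟩

theorem ae_cohomologous_at_generator {X K : Type*} [MeasurableSpace X] {μ : Measure X}
    [AddGroup K] {T : X ≃ᵐ X} (hT : Measure.QuasiMeasurePreserving T μ μ)
    {S : X → X} {v : K → K} {α : X × X → K} {φ : X → K} {B : Set X} (hB : μ Bᶜ = 0)
    (h : ∀ x ∈ B, ∀ y ∈ B, (∃ n : ℤ, (T.toEquiv ^ n) x = y) →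
      α (S x, S y) = φ x + v (α (x, y)) - φ y) :
    ∀ᵐ x ∂μ, α (S (T x), S x) = φ (T x) + v (α (T x, x)) - φ x := by
  have hB' : ∀ᵐ x ∂μ, x ∈ B := mem_ae_iff.2 hB
  filter_upwards [hB', hT.ae hB'] with x hx hTx
  exact h _ hTx _ hx ⟨-1, by simp⟩

section WeightedKoopman

variable {X K E : Type*} [MeasurableSpace X] {μ : Measure X} [AddCommGroup K]
  [TopologicalSpace K] [MeasurableSpace K] [BorelSpace K]
  [NormedAddCommGroup E] [NormedSpace ℂ E] {p : ℝ≥0∞} [Fact (1 ≤ p)]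

theorem AddChar.measurable_coe_comp {χ : AddChar K Circle} (hχ : Continuous χ) {f : X → K}
    (hf : Measurable f) : Measurable fun x => (χ (f x) : ℂ) :=
  (continuous_subtype_val.comp hχ).measurable.comp hf

/-- The operator `U_{T,χ}` of the paper. -/
noncomputable def weightedKoopman (T : X ≃ᵐ X) (hT : MeasurePreserving T μ μ)
    {α : X × X → K} (hα : Measurable α) {χ : AddChar K Circle} (hχ : Continuous χ) :
    Lp E p μ ≃ₗᵢ[ℂ] Lp E p μ :=
  weightedCompEquiv T hT (w := fun x => χ (α (T x, x)))
    (AddChar.measurable_coe_comp hχ (hα.comp (T.measurable.prodMk measurable_id)))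

variable {T : X ≃ᵐ X} (hT : MeasurePreserving T μ μ) {α : X × X → K} (hα : Measurable α)
  {S : X ≃ᵐ X} {φ : X → K}

theorem weightedKoopman_congr {χ χ' : AddChar K Circle} (h : χ = χ') {hχ : Continuous χ}
    {hχ' : Continuous χ'} :
    (weightedKoopman T hT hα hχ : Lp E p μ ≃ₗᵢ[ℂ] Lp E p μ) =
      weightedKoopman T hT hα hχ' := by
  subst h
  rfl

theorem isConj_weightedKoopman_compAddMonoidHom (hS : MeasurePreserving S μ μ)
    (hST : ∀ x, S (T x) = T (S x)) (hφ : Measurable φ) {v : K →+ K} (hv : Continuous v)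
    (hcohom : ∀ᵐ x ∂μ, α (S (T x), S x) = φ (T x) + v (α (T x, x)) - φ x)
    {χ : AddChar K Circle} (hχ : Continuous χ) :
    IsConj (weightedKoopman T hT hα hχ : Lp E p μ ≃ₗᵢ[ℂ] Lp E p μ)
      (weightedKoopman T hT hα (χ := χ.compAddMonoidHom v) (hχ.comp hv)) := by
  refine isConj_weightedCompEquiv hST (hS := hS) (u := fun x => χ (φ x))
    (hu := AddChar.measurable_coe_comp hχ hφ) ?_
  filter_upwards [hcohom] with x hx
  rw [← hST, hx, AddChar.compAddMonoidHom_apply, ← AddChar.map_add_eq_mul,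
    ← AddChar.map_add_eq_mul]
  congr 1
  abel

theorem isConj_weightedKoopman_zsmul (hS : MeasurePreserving S μ μ)
    (hST : ∀ x, S (T x) = T (S x)) (hφ : Measurable φ) {v : AddAut K} (hv : Continuous v)
    (hv' : Continuous v.symm)
    (hcohom : ∀ᵐ x ∂μ, α (S (T x), S x) = φ (T x) + v (α (T x, x)) - φ x)
    {χ : AddChar K Circle} (hχ : Continuous χ) (j : ℤ) :
    IsConj (weightedKoopman T hT hα hχ : Lp E p μ ≃ₗᵢ[ℂ] Lp E p μ)
      (weightedKoopman T hT hα (χ := χ.compAddMonoidHom (j • v).toAddMonoidHom)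
        (hχ.comp (AddAut.continuous_zsmul hv hv' j))) := by
  have step := fun (χ : AddChar K Circle) (hχ : Continuous χ) =>
    isConj_weightedKoopman_compAddMonoidHom (E := E) (p := p) hT hα hS hST hφ
      (v := v.toAddMonoidHom) hv hcohom hχ
  induction j using Int.induction_on with
  | zero =>
    convert IsConj.refl (weightedKoopman T hT hα hχ) using 1
    exact weightedKoopman_congr hT hα (by ext; simp)
  | succ k ih =>
    convert ih.trans (step (χ.compAddMonoidHom (k • v).toAddMonoidHom)
      (hχ.comp (AddAut.continuous_zsmul hv hv' k))) using 1
    exact weightedKoopman_congr hT hα (by ext; simp [add_zsmul])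
  | pred k ih =>
    refine ih.trans ?_
    convert (step (χ.compAddMonoidHom ((-k - 1 : ℤ) • v).toAddMonoidHom)
      (hχ.comp (AddAut.continuous_zsmul hv hv' (-k - 1)))).symm using 1
    exact weightedKoopman_congr hT hα (by ext; simp [sub_zsmul])

end WeightedKoopman

theorem weighted_koopman_unitarily_equivalent_general
    {X : Type*} [MeasurableSpace X]
    (μ : Measure X)
    (T : X ≃ᵐ X) (hT : MeasurePreserving T μ μ)
    {K : Type*} [AddCommGroup K] [TopologicalSpace K]
    [MeasurableSpace K] [BorelSpace K]
    (v : AddAut K) (hv : Continuous v) (hv' : Continuous v.symm)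
    (α : X × X → K) (hα : Measurable α)
    (S : X ≃ᵐ X) (hS : MeasurePreserving S μ μ)
    (hST : ∀ x, S (T x) = T (S x))
    -- `α ∘ S` is cohomologous to `v ∘ α`
    (hcohom : ∃ φ : X → K, Measurable φ ∧ ∃ B : Set X, μ Bᶜ = 0 ∧
      ∀ x ∈ B, ∀ y ∈ B, (∃ n : ℤ, (T.toEquiv ^ n) x = y) →
        α (S x, S y) = φ x + v (α (x, y)) - φ y)
    (χ : AddChar K Circle) (hχ : Continuous χ) (i : ℤ) :
    ∀ (U₁ U₂ : Lp ℂ 2 μ ≃ₗᵢ[ℂ] Lp ℂ 2 μ),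
      (∀ f, lpFun (U₁ f) =ᵐ[μ]
        fun x => (χ (α (T x, x)) : ℂ) * lpFun f (T x)) →
      (∀ f, lpFun (U₂ f) =ᵐ[μ]
        fun x => (χ ((i • v) (α (T x, x))) : ℂ) * lpFun f (T x)) →
      ∃ e : Lp ℂ 2 μ ≃ₗᵢ[ℂ] Lp ℂ 2 μ, ∀ f, e (U₁ f) = U₂ (e f) := by
  intro U₁ U₂ h₁ h₂
  obtain ⟨φ, hφ, B, hB, hcohom⟩ := hcohom
  have hU₁ : U₁ = weightedKoopman T hT hα hχ := eq_weightedCompEquiv_of_ae T hT _ h₁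
  have hU₂ : U₂ = weightedKoopman T hT hα (χ := χ.compAddMonoidHom (i • v).toAddMonoidHom)
      (hχ.comp (AddAut.continuous_zsmul hv hv' i)) := eq_weightedCompEquiv_of_ae T hT _ h₂
  subst hU₁ hU₂
  exact LinearIsometryEquiv.exists_apply_eq_of_isConj <| isConj_weightedKoopman_zsmul hT hα hS
    hST hφ hv hv' (ae_cohomologous_at_generator hT.quasiMeasurePreserving hB hcohom) hχ i

/-- Remark 2.3.  Let `T` be an ergodic measure preserving
transformation with orbit equivalence relation `R`, `K` a compact abelian group with
a continuous automorphism `v`, `α : R → K` a cocycle with values in `K`, and `S` a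
measure preserving transformation commuting with `T`.  If `α∘S` is cohomologous to
`v∘α`, then for every character `χ` of `K` and every `i ∈ ℤ` the weighted Koopman
operators `U_{T,χ}` and `U_{T,χ∘v^i}` are unitarily equivalent. -/
theorem weighted_koopman_unitarily_equivalent
    {X : Type*} [MeasurableSpace X] [StandardBorelSpace X]
    (μ : Measure X) [SigmaFinite μ]
    (T : X ≃ᵐ X) (hT : MeasurePreserving T μ μ) (herg : Ergodic T μ)
    {K : Type*} [AddCommGroup K] [TopologicalSpace K] [CompactSpace K]
    [IsTopologicalAddGroup K] [MeasurableSpace K] [BorelSpace K]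
    (v : AddAut K) (hv : Continuous v) (hv' : Continuous v.symm)
    (α : X × X → K) (hα : Measurable α)
    -- `α` is a cocycle of the `T`-orbit equivalence relation `R`
    (hcoc : ∀ x y z : X, (∃ n : ℤ, (T.toEquiv ^ n) x = y) →
      (∃ n : ℤ, (T.toEquiv ^ n) y = z) →
      α (x, y) + α (y, z) = α (x, z))
    (S : X ≃ᵐ X) (hS : MeasurePreserving S μ μ)
    (hST : ∀ x, S (T x) = T (S x))
    -- `α ∘ S` is cohomologous to `v ∘ α`
    (hcohom : ∃ φ : X → K, Measurable φ ∧ ∃ B : Set X, μ Bᶜ = 0 ∧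
      ∀ x ∈ B, ∀ y ∈ B, (∃ n : ℤ, (T.toEquiv ^ n) x = y) →
        α (S x, S y) = φ x + v (α (x, y)) - φ y)
    (χ : AddChar K Circle) (hχ : Continuous χ) (i : ℤ) :
    ∀ (U₁ U₂ : Lp ℂ 2 μ ≃ₗᵢ[ℂ] Lp ℂ 2 μ),
      (∀ f, lpFun (U₁ f) =ᵐ[μ]
        fun x => (χ (α (T x, x)) : ℂ) * lpFun f (T x)) →
      (∀ f, lpFun (U₂ f) =ᵐ[μ]
        fun x => (χ ((i • v) (α (T x, x))) : ℂ) * lpFun f (T x)) →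
      ∃ e : Lp ℂ 2 μ ≃ₗᵢ[ℂ] Lp ℂ 2 μ, ∀ f, e (U₁ f) = U₂ (e f) :=
  weighted_koopman_unitarily_equivalent_general μ T hT v hv hv' α hα S hS hST hcohom χ hχ i
end

section
/- Let (X,μ) be the (C,F)-space (a σ-finite measure space), and let C_n^• ⊂ C_n be subsets with #C_n^•/#C_n → δ for some constant δ ∈ [0,1]. Then the multiplication operators by the indicator functions 1_{[C_n^•]_n} converge to δ·I in the weak operator topology on L²(X,μ), i.e., ∫ 1_{[C_n^•]_n} f g dμ → δ ∫ f g dμ for all f, g ∈ L²(X,μ). -/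
open MeasureTheory Filter
open scoped ENNReal

namespace IndWeakAux

open Set

/-- Box/cylinder sets in `ℕ → ℤ`. -/
def boxSet (N : ℕ) (s : ℕ → Set ℤ) : Set (ℕ → ℤ) := {x | ∀ i < N, x i ∈ s i}

lemma measurableSet_boxSet (N : ℕ) (s : ℕ → Set ℤ) : MeasurableSet (boxSet N s) := by
  have : boxSet N s = ⋂ i, ⋂ (_ : i < N), (fun x : ℕ → ℤ => x i) ⁻¹' s i := by
    ext x; simp [boxSet]
  rw [this]
  exact MeasurableSet.iInter fun i => MeasurableSet.iInter fun _ =>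
    (measurable_pi_apply i) trivial

/-- The collection of all boxes. -/
def boxes : Set (Set (ℕ → ℤ)) := {S | ∃ N s, S = boxSet N s}

lemma isPiSystem_boxes : IsPiSystem boxes := by
  rintro S ⟨N, s, rfl⟩ T ⟨M, t, rfl⟩ -
  refine ⟨max N M, fun i => (if i < N then s i else univ) ∩ (if i < M then t i else univ), ?_⟩
  ext x
  simp only [boxSet, mem_inter_iff, mem_setOf_eq, Set.mem_inter_iff]
  constructor
  · rintro ⟨h1, h2⟩ i hi
    constructor
    · split_ifs with h; · exact h1 i h
      · exact mem_univ _
    · split_ifs with h; · exact h2 i h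
      · exact mem_univ _
  · intro h
    constructor
    · intro i hi
      have := (h i (lt_of_lt_of_le hi (le_max_left _ _))).1
      rwa [if_pos hi] at this
    · intro i hi
      have := (h i (lt_of_lt_of_le hi (le_max_right _ _))).2
      rwa [if_pos hi] at this

lemma generateFrom_boxes :
    (inferInstance : MeasurableSpace (ℕ → ℤ)) = MeasurableSpace.generateFrom boxes := by
  apply le_antisymm
  · rw [show (inferInstance : MeasurableSpace (ℕ → ℤ)) = MeasurableSpace.pi from rfl]
    refine iSup_le fun i => ?_
    rintro t ⟨U, -, rfl⟩
    refine MeasurableSpace.measurableSet_generateFrom ⟨i + 1,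
      fun j => if j = i then U else univ, ?_⟩
    ext x
    simp only [mem_preimage, boxSet, mem_setOf_eq]
    constructor
    · intro h j hj
      split_ifs with hji
      · subst hji; exact h
      · exact mem_univ _
    · intro h
      have := h i (Nat.lt_succ_self i)
      rwa [if_pos rfl] at this
  · exact MeasurableSpace.generateFrom_le (by rintro S ⟨N, s, rfl⟩; exact measurableSet_boxSet N s)

/-- Ratio of the part of `C i` inside `s`. -/
noncomputable def rho (C : ℕ → Finset ℤ) (i : ℕ) (s : Set ℤ) : ℝ≥0∞ :=
  (((↑(C i) ∩ s : Set ℤ).ncard : ℝ≥0∞)) / ((C i).card : ℝ≥0∞)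

lemma rho_univ (C : ℕ → Finset ℤ) (hCne : ∀ n, (C n).Nonempty) (i : ℕ) :
    rho C i univ = 1 := by
  rw [rho, inter_univ, ncard_coe_finset]
  exact ENNReal.div_self (by simp [Finset.card_ne_zero_of_mem (hCne i).choose_spec]) (by simp)

lemma P_box (C : ℕ → Finset ℤ) (hCne : ∀ n, (C n).Nonempty)
    (P : Measure (ℕ → ℤ)) [IsProbabilityMeasure P]
    (hP : ∀ (N : ℕ) (s : ℕ → Finset ℤ),
      P {x | ∀ n < N, x n ∈ s n} =
        ∏ n ∈ Finset.range N, (((s n ∩ C n).card : ℝ≥0∞) / ((C n).card : ℝ≥0∞)))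
    (N : ℕ) (s : ℕ → Set ℤ) :
    P (boxSet N s) = ∏ i ∈ Finset.range N, rho C i (s i) := by
  classical
  set t : ℕ → Finset ℤ := fun i => (C i).filter (fun z => z ∈ s i) with ht
  have htc : ∀ i, (↑(t i) : Set ℤ) = ↑(C i) ∩ s i := by
    intro i; ext z; simp [ht, and_comm]
  have hF : P {x : ℕ → ℤ | ∀ i < N, x i ∈ C i} = 1 := by
    rw [hP N C]
    refine Finset.prod_eq_one fun i _ => ?_
    rw [Finset.inter_self]
    exact ENNReal.div_self (by simp [Finset.card_ne_zero_of_mem (hCne i).choose_spec]) (by simp)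
  have hFc : P ({x : ℕ → ℤ | ∀ i < N, x i ∈ C i}ᶜ) = 0 := by
    have hm : MeasurableSet {x : ℕ → ℤ | ∀ i < N, x i ∈ C i} := by
      have : {x : ℕ → ℤ | ∀ i < N, x i ∈ C i} = boxSet N (fun i => ↑(C i)) := rfl
      · rw [this]; exact measurableSet_boxSet N _
    rw [measure_compl hm (by simp), hF]
    simp
  have h1 : P (boxSet N s) = P ({x | ∀ i < N, x i ∈ t i}) := by
    apply le_antisymm
    · calc P (boxSet N s) ≤ P ({x | ∀ i < N, x i ∈ t i} ∪ {x : ℕ → ℤ | ∀ i < N, x i ∈ C i}ᶜ) := by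
            apply measure_mono
            intro x hx
            by_cases hxF : ∀ i < N, x i ∈ C i
            · left; intro i hi; simp [ht, hxF i hi]; exact hx i hi
            · right; exact hxF
        _ ≤ P ({x | ∀ i < N, x i ∈ t i}) + P ({x : ℕ → ℤ | ∀ i < N, x i ∈ C i}ᶜ) :=
            measure_union_le _ _
        _ = P ({x | ∀ i < N, x i ∈ t i}) := by rw [hFc, add_zero]
    · apply measure_mono
      intro x hx i hi
      have := hx i hi
      simp [ht] at this
      exact this.2
  rw [h1, hP N t]
  refine Finset.prod_congr rfl fun i _ => ?_
  rw [rho, ← htc i, ncard_coe_finset, Finset.inter_eq_left.mpr (Finset.filter_subset _ _)]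

section

variable (C Cb : ℕ → Finset ℤ)

/-- The elementary events `x n ∈ Cb n`. -/
def B (n : ℕ) : Set (ℕ → ℤ) := {x | x n ∈ Cb n}

lemma measurableSet_B (n : ℕ) : MeasurableSet (B Cb n) :=
  (measurable_pi_apply n) trivial

variable (hCne : ∀ n, (C n).Nonempty) (hCb : ∀ n, Cb n ⊆ C n)
variable (P : Measure (ℕ → ℤ)) [IsProbabilityMeasure P]
variable (hP : ∀ (N : ℕ) (s : ℕ → Finset ℤ),
      P {x | ∀ n < N, x n ∈ s n} =
        ∏ n ∈ Finset.range N, (((s n ∩ C n).card : ℝ≥0∞) / ((C n).card : ℝ≥0∞)))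

include hCne hCb hP in
lemma key (N : ℕ) (s : ℕ → Set ℤ) (n : ℕ) (hNn : N ≤ n) :
    P (boxSet N s ∩ B Cb n) =
      P (boxSet N s) * (((Cb n).card : ℝ≥0∞) / ((C n).card : ℝ≥0∞)) := by
  set s' : ℕ → Set ℤ := fun i => if i < N then s i else if i = n then ↑(Cb n) else univ with hs'
  have hset : boxSet N s ∩ B Cb n = boxSet (n + 1) s' := by
    ext x
    simp only [boxSet, B, mem_inter_iff, mem_setOf_eq]
    constructor
    · rintro ⟨h1, h2⟩ i hi
      by_cases hiN : i < N
      · simpa [hs', hiN] using h1 i hiN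
      · by_cases hin : i = n
        · subst hin; simpa [hs', hiN] using h2
        · simp [hs', hiN, hin]
    · intro h
      refine ⟨fun i hi => ?_, ?_⟩
      · have := h i (by omega)
        simpa [hs', hi] using this
      · have := h n (Nat.lt_succ_self n)
        simpa [hs', Nat.not_lt.mpr hNn] using this
  rw [hset, P_box C hCne P hP, Finset.prod_range_succ]
  have h1 : ∏ i ∈ Finset.range n, rho C i (s' i) = ∏ i ∈ Finset.range N, rho C i (s' i) :=
    (Finset.prod_subset (Finset.range_subset_range.mpr hNn) (fun i hi hiN => by
      have hi1 : ¬ i < N := by simpa using hiN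
      have hi2 : i ≠ n := by simp at hi; omega
      simp only [hs', if_neg hi1, if_neg hi2]
      exact rho_univ C hCne i)).symm
  have h2 : ∏ i ∈ Finset.range N, rho C i (s' i) = ∏ i ∈ Finset.range N, rho C i (s i) :=
    Finset.prod_congr rfl fun i hi => by
      simp at hi
      simp [hs', hi]
  have h3 : rho C n (s' n) = ((Cb n).card : ℝ≥0∞) / ((C n).card : ℝ≥0∞) := by
    have : s' n = ↑(Cb n) := by simp [hs', Nat.not_lt.mpr hNn]
    rw [this, rho, ← Finset.coe_inter, ncard_coe_finset,
      Finset.inter_eq_right.mpr (hCb n)]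
  rw [h1, h2, h3, P_box C hCne P hP]

include hCne hCb hP in
lemma PB (n : ℕ) : P (B Cb n) = ((Cb n).card : ℝ≥0∞) / ((C n).card : ℝ≥0∞) := by
  have h0 : boxSet 0 (fun _ => univ) = univ := by
    ext x; simp [boxSet]
  have := key C Cb hCne hCb P hP 0 (fun _ => univ) n (Nat.zero_le n)
  rw [h0, univ_inter, measure_univ, one_mul] at this
  exact this

end

section DynkinSteps

variable {α : Type*} [MeasurableSpace α] {μ : Measure α} [IsFiniteMeasure μ]
  {A : ℕ → Set α} (hA : ∀ n, MeasurableSet (A n)) {δ : ℝ}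

include hA in
lemma dynkin_compl (hPA : Tendsto (fun n => (μ (A n)).toReal) atTop (nhds (δ * (μ univ).toReal)))
    (T : Set α) (hTm : MeasurableSet T)
    (hT : Tendsto (fun n => (μ (T ∩ A n)).toReal) atTop (nhds (δ * (μ T).toReal))) :
    Tendsto (fun n => (μ (Tᶜ ∩ A n)).toReal) atTop (nhds (δ * (μ Tᶜ).toReal)) := by
  have hdiff : ∀ n, μ (Tᶜ ∩ A n) = μ (A n) - μ (T ∩ A n) := by
    intro n
    have hset : Tᶜ ∩ A n = A n \ (T ∩ A n) := by
      ext x; simp; tauto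
    rw [hset, measure_diff Set.inter_subset_right ((hTm.inter (hA n)).nullMeasurableSet)
      (measure_ne_top _ _)]
  have htr : ∀ n, (μ (Tᶜ ∩ A n)).toReal = (μ (A n)).toReal - (μ (T ∩ A n)).toReal := by
    intro n
    rw [hdiff n,
      ENNReal.toReal_sub_of_le (measure_mono Set.inter_subset_right) (measure_ne_top _ _)]
  have hcompl : (μ Tᶜ).toReal = (μ univ).toReal - (μ T).toReal := by
    rw [measure_compl hTm (measure_ne_top _ _),
      ENNReal.toReal_sub_of_le (measure_mono (Set.subset_univ T)) (measure_ne_top _ _)]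
  simp only [htr, hcompl]
  have := hPA.sub hT
  convert this using 2
  ring

include hA in
lemma dynkin_iUnion (f : ℕ → Set α) (hd : Pairwise (Function.onFun Disjoint f))
    (hm : ∀ i, MeasurableSet (f i))
    (h : ∀ i, Tendsto (fun n => (μ (f i ∩ A n)).toReal) atTop (nhds (δ * (μ (f i)).toReal))) :
    Tendsto (fun n => (μ ((⋃ i, f i) ∩ A n)).toReal) atTop
      (nhds (δ * (μ (⋃ i, f i)).toReal)) := by
  have hmeas : ∀ n, μ ((⋃ i, f i) ∩ A n) = ∑' i, μ (f i ∩ A n) := by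
    intro n
    rw [Set.iUnion_inter]
    exact measure_iUnion
      (hd.mono fun i j hij => hij.mono Set.inter_subset_left Set.inter_subset_left)
      (fun i => (hm i).inter (hA n))
  have hU : μ (⋃ i, f i) = ∑' i, μ (f i) := measure_iUnion hd hm
  have hsum : Summable (fun i => (μ (f i)).toReal) :=
    ENNReal.summable_toReal (by rw [← hU]; exact measure_ne_top _ _)
  have htsum : ∀ n, (μ ((⋃ i, f i) ∩ A n)).toReal = ∑' i, (μ (f i ∩ A n)).toReal := by
    intro n
    rw [hmeas n, ENNReal.tsum_toReal_eq (fun i => measure_ne_top _ _)]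
  simp only [htsum]
  have hlim : Tendsto (fun n => ∑' i, (μ (f i ∩ A n)).toReal) atTop
      (nhds (∑' i, δ * (μ (f i)).toReal)) := by
    apply tendsto_tsum_of_dominated_convergence hsum h
    filter_upwards with n i
    rw [Real.norm_eq_abs, abs_of_nonneg ENNReal.toReal_nonneg]
    exact ENNReal.toReal_mono (measure_ne_top _ _) (measure_mono Set.inter_subset_left)
  convert hlim using 2
  rw [tsum_mul_left, hU, ENNReal.tsum_toReal_eq (fun i => measure_ne_top _ _)]

end DynkinSteps

section StepA

variable (C Cb : ℕ → Finset ℤ)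
variable (hCne : ∀ n, (C n).Nonempty) (hCb : ∀ n, Cb n ⊆ C n)
variable (P : Measure (ℕ → ℤ)) [IsProbabilityMeasure P]
variable (hP : ∀ (N : ℕ) (s : ℕ → Finset ℤ),
      P {x | ∀ n < N, x n ∈ s n} =
        ∏ n ∈ Finset.range N, (((s n ∩ C n).card : ℝ≥0∞) / ((C n).card : ℝ≥0∞)))
variable (δ : ℝ)
variable (hconv : Tendsto (fun n => ((Cb n).card : ℝ) / ((C n).card : ℝ)) atTop (nhds δ))

include hCne hCb hP hconv in
lemma stepA :
    ∀ T : Set (ℕ → ℤ), MeasurableSet T →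
      Tendsto (fun n => (P (T ∩ B Cb n)).toReal) atTop (nhds (δ * (P T).toReal)) := by
  have hPBr : ∀ n, (P (B Cb n)).toReal = ((Cb n).card : ℝ) / ((C n).card : ℝ) := by
    intro n
    rw [PB C Cb hCne hCb P hP n, ENNReal.toReal_div]
    simp
  have hPBtend : Tendsto (fun n => (P (B Cb n)).toReal) atTop (nhds (δ * (P univ).toReal)) := by
    simp only [hPBr, measure_univ, ENNReal.toReal_one, mul_one]
    exact hconv
  refine MeasurableSpace.induction_on_inter generateFrom_boxes isPiSystem_boxes ?_ ?_ ?_ ?_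
  · simp only [Set.empty_inter, measure_empty, ENNReal.toReal_zero, mul_zero]
    exact tendsto_const_nhds
  · rintro S ⟨N, s, rfl⟩
    have heq : ∀ᶠ n in atTop, (P (boxSet N s)).toReal * (((Cb n).card : ℝ) / ((C n).card : ℝ))
        = (P (boxSet N s ∩ B Cb n)).toReal := by
      filter_upwards [eventually_ge_atTop N] with n hn
      rw [key C Cb hCne hCb P hP N s n hn, ENNReal.toReal_mul, ENNReal.toReal_div]
      simp
    have h2 : Tendsto (fun n => (P (boxSet N s)).toReal * (((Cb n).card : ℝ) / ((C n).card : ℝ)))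
        atTop (nhds ((P (boxSet N s)).toReal * δ)) := hconv.const_mul _
    rw [mul_comm δ]
    exact h2.congr' heq
  · exact fun T hTm hT => dynkin_compl (measurableSet_B Cb) hPBtend T hTm hT
  · exact fun f hd hm h => dynkin_iUnion (measurableSet_B Cb) f hd hm h

end StepA

section StepB

variable {Y : Type*} [MeasurableSpace Y] (ν : Measure Y) [SigmaFinite ν]
  (P : Measure (ℕ → ℤ)) [IsProbabilityMeasure P]
  (Bs : ℕ → Set (ℕ → ℤ)) (hBs : ∀ n, MeasurableSet (Bs n)) (δ : ℝ)
  (hδ0 : 0 ≤ δ) (hδ1 : δ ≤ 1)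
  (hstepA : ∀ T : Set (ℕ → ℤ), MeasurableSet T →
      Tendsto (fun n => (P (T ∩ Bs n)).toReal) atTop (nhds (δ * (P T).toReal)))

include hBs hδ0 hδ1 hstepA in
lemma stepB (E : Set (Y × (ℕ → ℤ))) (hE : MeasurableSet E) (hEfin : ν.prod P E ≠ ∞) :
    Tendsto (fun n => ((ν.prod P) (E ∩ Prod.snd ⁻¹' Bs n)).toReal) atTop
      (nhds (δ * ((ν.prod P) E).toReal)) := by
  set A : ℕ → Set (Y × (ℕ → ℤ)) := fun n => Prod.snd ⁻¹' Bs n with hA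
  have hAm : ∀ n, MeasurableSet (A n) := fun n => measurable_snd (hBs n)
  -- the finite-measure case
  have inner : ∀ k : ℕ, ∀ E' : Set (Y × (ℕ → ℤ)), MeasurableSet E' →
      Tendsto (fun n => (((ν.restrict (spanningSets ν k)).prod P) (E' ∩ A n)).toReal) atTop
        (nhds (δ * (((ν.restrict (spanningSets ν k)).prod P) E').toReal)) := by
    intro k
    set ν' := ν.restrict (spanningSets ν k) with hν'
    haveI : IsFiniteMeasure ν' :=
      ⟨by rw [hν', Measure.restrict_apply_univ]; exact measure_spanningSets_lt_top ν k⟩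
    set μk := ν'.prod P with hμk
    have hPA : Tendsto (fun n => (μk (A n)).toReal) atTop (nhds (δ * (μk univ).toReal)) := by
      have hAn : ∀ n, μk (A n) = ν' univ * P (Bs n) := by
        intro n
        have : A n = (Set.univ : Set Y) ×ˢ Bs n := by
          ext ⟨y, x⟩; simp [hA]
        rw [this, hμk, Measure.prod_prod]
      have huniv : μk (Set.univ : Set (Y × (ℕ → ℤ))) = ν' univ := by
        rw [hμk, ← Set.univ_prod_univ, Measure.prod_prod]
        simp
      simp only [hAn, huniv, ENNReal.toReal_mul]
      have := (hstepA Set.univ MeasurableSet.univ)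
      simp only [Set.univ_inter, measure_univ, ENNReal.toReal_one, mul_one] at this
      have h2 := this.const_mul ((ν' univ).toReal)
      convert h2 using 2
      ring
    refine MeasurableSpace.induction_on_inter generateFrom_prod.symm isPiSystem_prod ?_ ?_ ?_ ?_
    · simp only [Set.empty_inter, measure_empty, ENNReal.toReal_zero, mul_zero]
      exact tendsto_const_nhds
    · rintro t ⟨s, hs, T, hT, rfl⟩
      have hset : ∀ n, (s ×ˢ T) ∩ A n = s ×ˢ (T ∩ Bs n) := by
        intro n; ext ⟨y, x⟩; simp [hA]; tauto
      have hval : ∀ n, μk ((s ×ˢ T) ∩ A n) = ν' s * P (T ∩ Bs n) := by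
        intro n; rw [hset n, hμk, Measure.prod_prod]
      simp only [hval]
      simp only [hval, ENNReal.toReal_mul, hμk, Measure.prod_prod]
      have h2 := (hstepA T hT).const_mul ((ν' s).toReal)
      convert h2 using 2
      ring
    · exact fun T hTm hT => dynkin_compl hAm hPA T hTm hT
    · exact fun f hd hm h => dynkin_iUnion hAm f hd hm h
  -- pass to the σ-finite case by approximation
  set μ := ν.prod P with hμ
  have hrestrict : ∀ k, (ν.restrict (spanningSets ν k)).prod P
      = μ.restrict ((spanningSets ν k) ×ˢ Set.univ) := fun k =>
    Measure.restrict_prod_eq_prod_univ _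
  have hmono : Monotone (fun k => E ∩ ((spanningSets ν k) ×ˢ (Set.univ : Set (ℕ → ℤ)))) := by
    intro i j hij
    exact Set.inter_subset_inter_right E
      (Set.prod_mono_left (monotone_spanningSets ν hij))
  have hcup : ⋃ k, E ∩ ((spanningSets ν k) ×ˢ (Set.univ : Set (ℕ → ℤ))) = E := by
    rw [← Set.inter_iUnion]
    have : ⋃ k, (spanningSets ν k) ×ˢ (Set.univ : Set (ℕ → ℤ)) = Set.univ := by
      rw [← Set.iUnion_prod_const, iUnion_spanningSets, Set.univ_prod_univ]
    rw [this, Set.inter_univ]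
  have happrox : Tendsto (fun k => μ (E ∩ ((spanningSets ν k) ×ˢ Set.univ))) atTop
      (nhds (μ E)) := by
    have := tendsto_measure_iUnion_atTop (μ := μ) hmono
    rwa [hcup] at this
  rw [Metric.tendsto_atTop]
  intro ε hε
  -- choose k
  have happrox' : Tendsto (fun k => (μ (E ∩ ((spanningSets ν k) ×ˢ Set.univ))).toReal) atTop
      (nhds ((μ E).toReal)) :=
    (ENNReal.tendsto_toReal hEfin).comp happrox
  obtain ⟨k, hk⟩ := (Metric.tendsto_atTop.mp happrox' (ε / 4) (by linarith)).imp
    (fun k h => h k le_rfl)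
  set R := (spanningSets ν k) ×ˢ (Set.univ : Set (ℕ → ℤ)) with hR
  have hRm : MeasurableSet R := (measurableSet_spanningSets ν k).prod MeasurableSet.univ
  set μk := (ν.restrict (spanningSets ν k)).prod P with hμk
  have hμkE : ∀ E' : Set (Y × (ℕ → ℤ)), MeasurableSet E' → μk E' = μ (E' ∩ R) := by
    intro E' hE'
    rw [hμk, hrestrict k, Measure.restrict_apply hE']
  -- leak bound
  have hleak : (μ E).toReal - (μ (E ∩ R)).toReal < ε / 4 := by
    have := hk
    rw [Real.dist_eq, abs_sub_lt_iff] at this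
    exact this.2
  obtain ⟨N, hN⟩ := Metric.tendsto_atTop.mp (inner k E hE) (ε / 4) (by linarith)
  refine ⟨N, fun n hn => ?_⟩
  have h1 := hN n hn
  rw [Real.dist_eq] at h1 ⊢
  have hfin1 : μ (E ∩ A n) ≠ ∞ := (measure_mono Set.inter_subset_left).trans_lt hEfin.lt_top |>.ne
  have hfin2 : ∀ S : Set (Y × (ℕ → ℤ)), S ⊆ E → μ S ≠ ∞ :=
    fun S hS => ((measure_mono hS).trans_lt hEfin.lt_top).ne
  -- |μ(E∩A n) - μk(E∩A n)| ≤ μE - μ(E∩R)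
  have hbound1 : (μ (E ∩ A n)).toReal - (μk (E ∩ A n)).toReal ≤
      (μ E).toReal - (μ (E ∩ R)).toReal := by
    rw [hμkE _ (hE.inter (hAm n))]
    have key1 : μ (E ∩ A n) + μ (E ∩ R) ≤ μ (E ∩ A n ∩ R) + μ E := by
      calc μ (E ∩ A n) + μ (E ∩ R) ≤ μ ((E ∩ A n ∩ R) ∪ (E \ R)) + μ (E ∩ R) := by
            gcongr
            intro x hx
            by_cases hxR : x ∈ R
            · exact Or.inl ⟨hx, hxR⟩
            · exact Or.inr ⟨hx.1, hxR⟩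
        _ ≤ μ (E ∩ A n ∩ R) + μ (E \ R) + μ (E ∩ R) := by
            gcongr; exact measure_union_le _ _
        _ = μ (E ∩ A n ∩ R) + (μ (E \ R) + μ (E ∩ R)) := by ring
        _ = μ (E ∩ A n ∩ R) + μ E := by
            rw [measure_diff_add_inter E hRm]
    have := ENNReal.toReal_mono (by
        exact ENNReal.add_ne_top.mpr ⟨hfin2 _ (Set.inter_subset_left.trans Set.inter_subset_left),
          hEfin⟩) key1
    rw [ENNReal.toReal_add hfin1 (hfin2 _ Set.inter_subset_left),
      ENNReal.toReal_add (hfin2 _ (Set.inter_subset_left.trans Set.inter_subset_left)) hEfin]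
      at this
    linarith
  have hge1 : (μk (E ∩ A n)).toReal ≤ (μ (E ∩ A n)).toReal := by
    rw [hμkE _ (hE.inter (hAm n))]
    exact ENNReal.toReal_mono hfin1 (measure_mono Set.inter_subset_left)
  have hge2 : (μk E).toReal ≤ (μ E).toReal := by
    rw [hμkE _ hE]
    exact ENNReal.toReal_mono hEfin (measure_mono Set.inter_subset_left)
  have hbound2 : (μ E).toReal - (μk E).toReal < ε / 4 := by
    rw [hμkE _ hE]
    exact hleak
  calc |(μ (E ∩ A n)).toReal - δ * (μ E).toReal|
      ≤ |(μ (E ∩ A n)).toReal - (μk (E ∩ A n)).toReal|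
        + |(μk (E ∩ A n)).toReal - δ * (μk E).toReal|
        + |δ * (μk E).toReal - δ * (μ E).toReal| := by
        have := abs_sub_le ((μ (E ∩ A n)).toReal) ((μk (E ∩ A n)).toReal) (δ * (μ E).toReal)
        have h2 := abs_sub_le ((μk (E ∩ A n)).toReal) (δ * (μk E).toReal) (δ * (μ E).toReal)
        linarith
    _ < ε / 4 + ε / 4 + ε / 2 := by
        have e1 : |(μ (E ∩ A n)).toReal - (μk (E ∩ A n)).toReal| < ε / 4 := by
          rw [abs_of_nonneg (by linarith [hge1])]
          linarith [hbound1, hleak]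
        have e3 : |δ * (μk E).toReal - δ * (μ E).toReal| < ε / 2 := by
          rw [← mul_sub, abs_mul, abs_of_nonneg hδ0]
          have : |(μk E).toReal - (μ E).toReal| < ε / 4 := by
            rw [abs_of_nonpos (by linarith [hge2])]
            linarith [hbound2]
          nlinarith [abs_nonneg ((μk E).toReal - (μ E).toReal), hδ0, hδ1, hε]
        linarith [h1]
    _ = ε := by ring

end StepB

end IndWeakAux

/-- In the `(C,F)`-space, modelled as the product of a σ-finite
factor `(Y,ν)` with the infinite product of the uniform probability measures on the
sets `C_n`, if `C_n^• ⊆ C_n` are subsets with `#C_n^•/#C_n → δ`, then the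
multiplication operators by the indicator functions `1_{[C_n^•]_n}` converge to
`δ·I` in the weak operator topology on `L²`:
`∫ 1_{[C_n^•]}· f · ḡ dμ → δ ∫ f · ḡ dμ` for all `f, g ∈ L²(μ)`. -/
theorem indicator_multiplication_weak_convergence
    {Y : Type*} [MeasurableSpace Y] (ν : Measure Y) [SigmaFinite ν]
    (C : ℕ → Finset ℤ) (hCne : ∀ n, (C n).Nonempty)
    (P : Measure (ℕ → ℤ)) [IsProbabilityMeasure P]
    -- `P` is the product of the uniform probability measures on the `C n`:
    (hP : ∀ (N : ℕ) (s : ℕ → Finset ℤ),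
      P {x | ∀ n < N, x n ∈ s n} =
        ∏ n ∈ Finset.range N, (((s n ∩ C n).card : ℝ≥0∞) / ((C n).card : ℝ≥0∞)))
    (Cb : ℕ → Finset ℤ) (hCb : ∀ n, Cb n ⊆ C n) (δ : ℝ)
    (hδ0 : 0 ≤ δ) (hδ1 : δ ≤ 1)
    (hconv : Tendsto (fun n => ((Cb n).card : ℝ) / ((C n).card : ℝ)) atTop (nhds δ)) :
    ∀ f g : Lp ℂ 2 (ν.prod P),
      Tendsto (fun n => ∫ p, ({p : Y × (ℕ → ℤ) | p.2 n ∈ Cb n}.indicator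
            (fun _ => (1 : ℂ)) p) * lpFun f p * (starRingEnd ℂ) (lpFun g p) ∂(ν.prod P))
        atTop
        (nhds ((δ : ℂ) * ∫ p, lpFun f p * (starRingEnd ℂ) (lpFun g p) ∂(ν.prod P))) := by
  intro f g
  classical
  let μ : Measure (Y × (ℕ → ℤ)) := ν.prod P
  set A : ℕ → Set (Y × (ℕ → ℤ)) := fun n => {p : Y × (ℕ → ℤ) | p.2 n ∈ Cb n} with hAdef
  have hAm : ∀ n, MeasurableSet (A n) := by
    intro n
    have h0 : MeasurableSet ((Cb n : Set ℤ)) := trivial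
    have h1 : A n = Prod.snd ⁻¹' ((fun x : ℕ → ℤ => x n) ⁻¹' (Cb n : Set ℤ)) := rfl
    rw [h1]
    exact measurable_snd ((measurable_pi_apply n) h0)
  have hstepA := IndWeakAux.stepA C Cb hCne hCb P hP δ hconv
  have hstepB : ∀ E : Set (Y × (ℕ → ℤ)), MeasurableSet E → μ E ≠ ∞ →
      Tendsto (fun n => (μ (E ∩ A n)).toReal) atTop (nhds (δ * (μ E).toReal)) := by
    intro E hE hEfin
    exact IndWeakAux.stepB ν P (IndWeakAux.B Cb) (IndWeakAux.measurableSet_B Cb) δ hδ0 hδ1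
      hstepA E hE hEfin
  -- the property, proven for all integrable functions by `Integrable.induction`
  set Q : (Y × (ℕ → ℤ) → ℂ) → Prop := fun h =>
    Tendsto (fun n => ∫ p in A n, h p ∂μ) atTop (nhds ((δ : ℂ) * ∫ p, h p ∂μ)) with hQdef
  have hQ : ∀ ⦃h : Y × (ℕ → ℤ) → ℂ⦄, Integrable h μ → Q h := by
    refine Integrable.induction Q ?_ ?_ ?_ ?_
    · -- indicators
      intro c s hs hsfin
      have h1 : ∀ n, ∫ p in A n, s.indicator (fun _ => c) p ∂μ
          = ((μ (s ∩ A n)).toReal : ℝ) • c := by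
        intro n
        rw [MeasureTheory.setIntegral_indicator hs, setIntegral_const, Set.inter_comm]
        rfl
      have h2 : ∫ p, s.indicator (fun _ => c) p ∂μ = ((μ s).toReal : ℝ) • c := by
        rw [MeasureTheory.integral_indicator hs, setIntegral_const]
        rfl
      simp only [hQdef, h1, h2]
      have h3 := (hstepB s hs hsfin.ne).smul_const c
      have h4 : (δ : ℂ) * ((μ s).toReal : ℝ) • c = (δ * (μ s).toReal) • c := by
        simp [mul_smul, Complex.real_smul]
      rw [h4]
      exact h3
    · -- addition
      intro h1 h2 hdisj hint1 hint2 hQ1 hQ2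
      simp only [hQdef] at hQ1 hQ2 ⊢
      have he1 : ∀ n, ∫ p in A n, (h1 + h2) p ∂μ = (∫ p in A n, h1 p ∂μ) + ∫ p in A n, h2 p ∂μ := by
        intro n
        simp only [Pi.add_apply]
        exact integral_add hint1.integrableOn hint2.integrableOn
      have he2 : ∫ p, (h1 + h2) p ∂μ = (∫ p, h1 p ∂μ) + ∫ p, h2 p ∂μ := by
        simp only [Pi.add_apply]
        exact integral_add hint1 hint2
      simp only [he1, he2, mul_add]
      exact hQ1.add hQ2
    · -- closedness in L¹
      apply IsSeqClosed.isClosed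
      intro F f hF hFf
      simp only [Set.mem_setOf_eq, hQdef] at hF ⊢
      rw [Metric.tendsto_atTop]
      intro ε hε
      obtain ⟨J, hJ⟩ := Metric.tendsto_atTop.mp hFf (ε / 3) (by linarith)
      have hdistJ : dist (F J) f < ε / 3 := hJ J le_rfl
      have hdist_int : dist (F J) f = ∫ p, ‖(F J : Y × (ℕ → ℤ) → ℂ) p - f p‖ ∂μ := by
        rw [L1.dist_eq_integral_dist]
        exact integral_congr_ae (Filter.Eventually.of_forall fun p => dist_eq_norm _ _)
      have hFJint : Integrable (F J : Y × (ℕ → ℤ) → ℂ) μ := L1.integrable_coeFn (F J)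
      have hfint : Integrable (f : Y × (ℕ → ℤ) → ℂ) μ := L1.integrable_coeFn f
      obtain ⟨N, hN⟩ := Metric.tendsto_atTop.mp (hF J) (ε / 3) (by linarith)
      refine ⟨N, fun n hn => ?_⟩
      have key1 : dist (∫ p in A n, (f : Y × (ℕ → ℤ) → ℂ) p ∂μ)
          (∫ p in A n, (F J : Y × (ℕ → ℤ) → ℂ) p ∂μ) ≤ dist (F J) f := by
        rw [dist_eq_norm, ← integral_sub hfint.integrableOn hFJint.integrableOn]
        calc ‖∫ p in A n, ((f : Y × (ℕ → ℤ) → ℂ) p - (F J : Y × (ℕ → ℤ) → ℂ) p) ∂μ‖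
            ≤ ∫ p in A n, ‖(f : Y × (ℕ → ℤ) → ℂ) p - (F J : Y × (ℕ → ℤ) → ℂ) p‖ ∂μ :=
              norm_integral_le_integral_norm _
          _ ≤ ∫ p, ‖(f : Y × (ℕ → ℤ) → ℂ) p - (F J : Y × (ℕ → ℤ) → ℂ) p‖ ∂μ :=
              setIntegral_le_integral (hfint.sub hFJint).norm
                (Filter.Eventually.of_forall fun p => norm_nonneg _)
          _ = dist (F J) f := by
              rw [hdist_int]
              congr 1
              funext p
              rw [norm_sub_rev]
      have key2 : dist ((δ : ℂ) * ∫ p, (F J : Y × (ℕ → ℤ) → ℂ) p ∂μ)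
          ((δ : ℂ) * ∫ p, (f : Y × (ℕ → ℤ) → ℂ) p ∂μ) ≤ dist (F J) f := by
        rw [dist_eq_norm, ← mul_sub, norm_mul, ← integral_sub hFJint hfint]
        have hnδ : ‖(δ : ℂ)‖ ≤ 1 := by
          rw [Complex.norm_real, Real.norm_eq_abs, abs_of_nonneg hδ0]
          exact hδ1
        calc ‖(δ : ℂ)‖ * ‖∫ p, ((F J : Y × (ℕ → ℤ) → ℂ) p - (f : Y × (ℕ → ℤ) → ℂ) p) ∂μ‖
            ≤ 1 * ∫ p, ‖(F J : Y × (ℕ → ℤ) → ℂ) p - (f : Y × (ℕ → ℤ) → ℂ) p‖ ∂μ := by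
              apply mul_le_mul hnδ (norm_integral_le_integral_norm _) (norm_nonneg _) zero_le_one
          _ = dist (F J) f := by rw [one_mul, hdist_int]
      have key3 := hN n hn
      have tri := dist_triangle4 (∫ p in A n, (f : Y × (ℕ → ℤ) → ℂ) p ∂μ)
        (∫ p in A n, (F J : Y × (ℕ → ℤ) → ℂ) p ∂μ)
        ((δ : ℂ) * ∫ p, (F J : Y × (ℕ → ℤ) → ℂ) p ∂μ)
        ((δ : ℂ) * ∫ p, (f : Y × (ℕ → ℤ) → ℂ) p ∂μ)
      have key1' : dist (∫ p in A n, (f : Y × (ℕ → ℤ) → ℂ) p ∂μ)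
          (∫ p in A n, (F J : Y × (ℕ → ℤ) → ℂ) p ∂μ) < ε / 3 := lt_of_le_of_lt key1 hdistJ
      have key2' : dist ((δ : ℂ) * ∫ p, (F J : Y × (ℕ → ℤ) → ℂ) p ∂μ)
          ((δ : ℂ) * ∫ p, (f : Y × (ℕ → ℤ) → ℂ) p ∂μ) < ε / 3 := lt_of_le_of_lt key2 hdistJ
      linarith
    · -- a.e. congruence
      intro h1 h2 hae hint1 hQ1
      simp only [hQdef] at hQ1 ⊢
      have he1 : ∀ n, ∫ p in A n, h2 p ∂μ = ∫ p in A n, h1 p ∂μ := fun n =>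
        integral_congr_ae (ae_restrict_of_ae hae.symm)
      have he2 : ∫ p, h2 p ∂μ = ∫ p, h1 p ∂μ := integral_congr_ae hae.symm
      simp only [he1, he2]
      exact hQ1
  -- the product of two L² functions is integrable
  set h : Y × (ℕ → ℤ) → ℂ := fun p => lpFun f p * (starRingEnd ℂ) (lpFun g p) with hhdef
  have hint : Integrable h μ := by
    have := MeasureTheory.L2.integrable_inner (𝕜 := ℂ) g f
    apply this.congr
    filter_upwards with p
    simp [hhdef, RCLike.inner_apply, lpFun, mul_comm]
  have hQh := hQ hint
  -- rewrite the statement into the form of `Q h`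
  have hrw : (fun n => ∫ p, ({p : Y × (ℕ → ℤ) | p.2 n ∈ Cb n}.indicator
        (fun _ => (1 : ℂ)) p) * lpFun f p * (starRingEnd ℂ) (lpFun g p) ∂μ)
      = fun n => ∫ p in A n, h p ∂μ := by
    funext n
    rw [← MeasureTheory.integral_indicator (hAm n)]
    congr 1
    funext p
    by_cases hp : p ∈ A n
    · simp only [hAdef] at hp
      simp [Set.indicator_of_mem hp, hhdef, hAdef]
    · simp only [hAdef] at hp
      simp [Set.indicator_of_notMem hp, hAdef]
  show Tendsto (fun n => ∫ p, ({p : Y × (ℕ → ℤ) | p.2 n ∈ Cb n}.indicator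
        (fun _ => (1 : ℂ)) p) * lpFun f p * (starRingEnd ℂ) (lpFun g p) ∂μ)
      atTop (nhds ((δ : ℂ) * ∫ p, lpFun f p * (starRingEnd ℂ) (lpFun g p) ∂μ))
  rw [hrw]
  exact hQh
end

section
/- Let U, V be unitary operators on Hilbert spaces H_1, H_2, and suppose there is a sequence (n_t) of integers and complex numbers a ≠ b such that U^{n_t} → aI and V^{n_t} → bI in the weak operator topology. Then the measures of maximal spectral type of U and V are mutually singular. -/
/-! Pairing with a spectral measure turns the hypotheses into convergence of the Fourier
coefficients `∫ z ^ (n_t + j) dν → a ∫ z ^ j dν`. The functionals `g ↦ ∫ z ^ n_t g dν` on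
`L¹(ν)` have norm at most one, and the monomials span a dense subspace of `L¹(ν)`, so
`∫ z ^ n_t g dν → a ∫ g dν` for every `g ∈ L¹(ν)`. Hence every finite `ρ ≪ ν` satisfies
`∫ z ^ n_t dρ → a ρ(𝕋)`. The part of `νU` absolutely continuous with respect to `νV` has both
`a ρ(𝕋)` and `b ρ(𝕋)` as this limit, so it vanishes. -/

open MeasureTheory Filter
open scoped ENNReal

variable {H : Type*} [NormedAddCommGroup H] [InnerProductSpace ℂ H] [CompleteSpace H]

/-- `ν` is the spectral measure of the vector `ξ` for the unitary `U`:
its Fourier coefficients are `⟨U^n ξ, ξ⟩`. -/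
def IsSpectralMeasureOf (U : H ≃ₗᵢ[ℂ] H) (ξ : H) (ν : Measure Circle) : Prop :=
  ∀ n : ℤ, ∫ z : Circle, (z : ℂ) ^ n ∂ν = (inner ℂ ((U ^ n) ξ) ξ : ℂ)

/-- `ν` is a measure of maximal spectral type for the unitary `U`: it is the spectral
measure of some vector, and the spectral measure of every vector is absolutely
continuous with respect to it. -/
def IsMaximalSpectralType (U : H ≃ₗᵢ[ℂ] H) (ν : Measure Circle) : Prop :=
  (∃ ξ : H, IsSpectralMeasureOf U ξ ν) ∧
    ∀ (η : H) (ρ : Measure Circle), IsSpectralMeasureOf U η ρ → ρ ≪ ν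

open Set Topology

open Submodule in
theorem ContinuousLinearMap.tendsto_apply_of_dense_span {ι 𝕜 E F : Type*}
    [NontriviallyNormedField 𝕜] [SeminormedAddCommGroup E] [NormedSpace 𝕜 E]
    [SeminormedAddCommGroup F] [NormedSpace 𝕜 F] {l : Filter ι} {T : ι → E →L[𝕜] F}
    {S : E →L[𝕜] F} {C : ℝ} (hT : ∀ i, ‖T i‖ ≤ C) {s : Set E}
    (hs : (span 𝕜 s).topologicalClosure = ⊤)
    (h : ∀ x ∈ s, Tendsto (fun i => T i x) l (𝓝 (S x))) (x : E) :
    Tendsto (fun i => T i x) l (𝓝 (S x)) := by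
  let M : Submodule 𝕜 E :=
    { carrier := {x | Tendsto (fun i => T i x) l (𝓝 (S x))}
      add_mem' := fun hx hy => by simpa using hx.add hy
      zero_mem' := by simpa using tendsto_const_nhds
      smul_mem' := fun c x hx => by simpa using hx.const_smul c }
  have hT_equi : Equicontinuous ((↑) ∘ T : ι → E → F) :=
    ((NormedSpace.equicontinuous_TFAE T).out 5 1).mp (⟨C, hT⟩ : ∃ C, ∀ i, ‖T i‖ ≤ C)
  have hM : IsClosed (M : Set E) := hT_equi.isClosed_setOfPred_tendsto S.continuous
  have hspan : (span 𝕜 s).topologicalClosure ≤ M :=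
    topologicalClosure_minimal _ (span_le.mpr h) hM
  exact hspan (hs ▸ mem_top)

section IntegralAgainstL1

variable {X : Type*} [TopologicalSpace X] [CompactSpace X] [MeasurableSpace X] [BorelSpace X]
  [SecondCountableTopologyEither X ℂ] (μ : Measure X) [IsFiniteMeasure μ]

noncomputable def integralAgainstL1 (φ : C(X, ℂ)) : Lp ℂ 1 μ →L[ℂ] ℂ :=
  (ContinuousLinearMap.mul ℂ ℂ).lpPairing μ ∞ 1 (ContinuousMap.toLp ∞ μ ℂ φ)

theorem integralAgainstL1_apply (φ : C(X, ℂ)) (g : Lp ℂ 1 μ) :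
    integralAgainstL1 μ φ g = ∫ x, φ x * g x ∂μ := by
  rw [integralAgainstL1, ContinuousLinearMap.lpPairing_eq_integral]
  refine integral_congr_ae ?_
  filter_upwards [ContinuousMap.coeFn_toLp (p := ∞) (𝕜 := ℂ) μ φ] with x hx
  rw [ContinuousLinearMap.mul_apply', hx]

theorem integralAgainstL1_apply_of_ae_eq (φ : C(X, ℂ)) {g : Lp ℂ 1 μ} {f : X → ℂ}
    (hgf : g =ᵐ[μ] f) : integralAgainstL1 μ φ g = ∫ x, φ x * f x ∂μ := by
  rw [integralAgainstL1_apply]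
  exact integral_congr_ae (hgf.mono fun x hx => by simp only [hx])

theorem norm_integralAgainstL1_le (φ : C(X, ℂ)) : ‖integralAgainstL1 μ φ‖ ≤ ‖φ‖ := by
  refine ContinuousLinearMap.opNorm_le_bound _ (norm_nonneg φ) fun g => ?_
  rw [integralAgainstL1_apply]
  calc ‖∫ x, φ x * g x ∂μ‖ ≤ ∫ x, ‖φ‖ * ‖g x‖ ∂μ :=
        norm_integral_le_of_norm_le ((L1.integrable_coeFn g).norm.const_mul _) <|
          ae_of_all _ fun x => by rw [norm_mul]; gcongr; exact φ.norm_coe_le_norm x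
    _ = ‖φ‖ * ‖g‖ := by rw [integral_const_mul, L1.norm_eq_integral_norm]

end IntegralAgainstL1

namespace Circle

noncomputable def monomial (j : ℤ) : C(Circle, ℂ) :=
  ⟨fun z => ((z ^ j : Circle) : ℂ), continuous_subtype_val.comp (continuous_zpow j)⟩

@[simp]
theorem monomial_apply (j : ℤ) (z : Circle) : monomial j z = (z : ℂ) ^ j := rfl

theorem norm_monomial_le (j : ℤ) : ‖monomial j‖ ≤ 1 :=
  (ContinuousMap.norm_le _ zero_le_one).mpr fun z => by simp [Circle.norm_coe]

open Submodule in
theorem span_monomial_closure_eq_top : (span ℂ (range monomial)).topologicalClosure = ⊤ := by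
  let e := AddCircle.homeomorphCircle (one_ne_zero (α := ℝ))
  let Φ : C(AddCircle (1 : ℝ), ℂ) →L[ℂ] C(Circle, ℂ) :=
    ⟨(ContinuousMap.compStarAlgHom' ℂ ℂ (e.symm : C(Circle, AddCircle (1 : ℝ)))).toLinearMap,
      ContinuousMap.continuous_precomp _⟩
  have hΦ : ∀ f, Φ f = f.comp e.symm := fun _ => rfl
  have hΦ_surj : Function.Surjective Φ := fun f => ⟨f.comp e, by ext; simp [hΦ]⟩
  have hfourier : ∀ j, Φ (fourier j) = monomial j := fun j => by
    ext z
    obtain ⟨x, rfl⟩ := e.surjective z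
    rw [hΦ, ContinuousMap.comp_apply, ContinuousMap.coe_coe, e.symm_apply_apply, fourier_apply,
      AddCircle.toCircle_zsmul, ← AddCircle.homeomorphCircle_apply one_ne_zero]
    rfl
  convert hΦ_surj.denseRange.topologicalClosure_map_submodule span_fourier_closure_eq_top
  rw [map_span, ← range_comp]
  congr 2
  exact (funext hfourier).symm

open Submodule in
theorem span_toLp_monomial_closure_eq_top (μ : Measure Circle) [IsFiniteMeasure μ]
    {p : ℝ≥0∞} [Fact (1 ≤ p)] (hp : p ≠ ∞) :
    (span ℂ (range fun j => ContinuousMap.toLp p μ ℂ (monomial j))).topologicalClosure = ⊤ := by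
  convert! (ContinuousMap.toLp_denseRange ℂ μ ℂ hp).topologicalClosure_map_submodule
    span_monomial_closure_eq_top
  rw [map_span, ← range_comp]
  rfl

section FourierCoefficients

variable {ι : Type*} {l : Filter ι} {n : ι → ℤ}

theorem tendsto_integral_zpow_mul {ν : Measure Circle} [IsFiniteMeasure ν] {c : ℂ}
    (h : ∀ j : ℤ, Tendsto (fun t => ∫ z, (z : ℂ) ^ (n t + j) ∂ν) l
      (𝓝 (c * ∫ z, (z : ℂ) ^ j ∂ν)))
    {g : Circle → ℂ} (hg : Integrable g ν) :
    Tendsto (fun t => ∫ z, (z : ℂ) ^ n t * g z ∂ν) l (𝓝 (c * ∫ z, g z ∂ν)) := by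
  have hT (t : ι) : ‖integralAgainstL1 ν (monomial (n t))‖ ≤ 1 :=
    (norm_integralAgainstL1_le ν _).trans (norm_monomial_le _)
  have hmonomial : ∀ x ∈ range fun j => ContinuousMap.toLp 1 ν ℂ (monomial j),
      Tendsto (fun t => integralAgainstL1 ν (monomial (n t)) x) l
        (𝓝 ((c • integralAgainstL1 ν 1) x)) := by
    rintro - ⟨j, rfl⟩
    have hj := ContinuousMap.coeFn_toLp (p := 1) (𝕜 := ℂ) ν (monomial j)
    simp only [smul_apply, smul_eq_mul,
      integralAgainstL1_apply_of_ae_eq ν _ hj]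
    simpa [← zpow_add₀ (Circle.coe_ne_zero _)] using h j
  have hlim := ContinuousLinearMap.tendsto_apply_of_dense_span hT
    (span_toLp_monomial_closure_eq_top ν ENNReal.one_ne_top) hmonomial (hg.toL1 g)
  simpa [integralAgainstL1_apply_of_ae_eq ν _ hg.coeFn_toL1] using hlim

theorem tendsto_integral_zpow_of_absolutelyContinuous {ν : Measure Circle} [IsFiniteMeasure ν]
    {c : ℂ}
    (h : ∀ j : ℤ, Tendsto (fun t => ∫ z, (z : ℂ) ^ (n t + j) ∂ν) l
      (𝓝 (c * ∫ z, (z : ℂ) ^ j ∂ν)))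
    {ρ : Measure Circle} [IsFiniteMeasure ρ] (hρ : ρ ≪ ν) :
    Tendsto (fun t => ∫ z, (z : ℂ) ^ n t ∂ρ) l (𝓝 (c * ρ.real univ)) := by
  have hdensity : Integrable (fun z => ((ρ.rnDeriv ν z).toReal : ℂ)) ν :=
    Measure.integrable_toReal_rnDeriv.ofReal
  have hρ_eq (f : Circle → ℂ) : ∫ z, f z ∂ρ = ∫ z, f z * (ρ.rnDeriv ν z).toReal ∂ν := by
    simp_rw [← integral_rnDeriv_smul hρ, Complex.real_smul, mul_comm]
  have hmass : ∫ z, ((ρ.rnDeriv ν z).toReal : ℂ) ∂ν = ρ.real univ := by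
    rw [integral_complex_ofReal, Measure.integral_toReal_rnDeriv hρ]
  simp_rw [hρ_eq, ← hmass]
  exact tendsto_integral_zpow_mul h hdensity

theorem mutuallySingular_of_tendsto_integral_zpow [l.NeBot] {μ ν : Measure Circle}
    [IsFiniteMeasure μ] [IsFiniteMeasure ν] {a b : ℂ} (hab : a ≠ b)
    (hμ : ∀ j : ℤ, Tendsto (fun t => ∫ z, (z : ℂ) ^ (n t + j) ∂μ) l
      (𝓝 (a * ∫ z, (z : ℂ) ^ j ∂μ)))
    (hν : ∀ j : ℤ, Tendsto (fun t => ∫ z, (z : ℂ) ^ (n t + j) ∂ν) l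
      (𝓝 (b * ∫ z, (z : ℂ) ^ j ∂ν))) :
    μ ⟂ₘ ν := by
  rw [← Measure.withDensity_rnDeriv_eq_zero]
  set ρ := ν.withDensity (μ.rnDeriv ν)
  have hρμ : ρ ≤ μ := Measure.withDensity_rnDeriv_le μ ν
  have : IsFiniteMeasure ρ := isFiniteMeasure_of_le μ hρμ
  have hlim := tendsto_nhds_unique
    (tendsto_integral_zpow_of_absolutelyContinuous hμ (Measure.absolutelyContinuous_of_le hρμ))
    (tendsto_integral_zpow_of_absolutelyContinuous hν (withDensity_absolutelyContinuous _ _))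
  have hmass : ρ.real univ = 0 := by
    exact_mod_cast (mul_eq_mul_right_iff.mp hlim).resolve_left hab
  rwa [measureReal_eq_zero_iff, Measure.measure_univ_eq_zero] at hmass

end FourierCoefficients

end Circle

theorem IsSpectralMeasureOf.tendsto_integral_zpow_add {ι E : Type*} [NormedAddCommGroup E]
    [InnerProductSpace ℂ E] {l : Filter ι} {U : E ≃ₗᵢ[ℂ] E} {ξ : E} {ν : Measure Circle}
    (hξ : IsSpectralMeasureOf U ξ ν) {n : ι → ℤ} {a : ℂ}
    (hU : ∀ ζ η : E, Tendsto (fun t => (inner ℂ ((U ^ n t) ζ) η : ℂ)) l (𝓝 (a * inner ℂ ζ η)))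
    (j : ℤ) :
    Tendsto (fun t => ∫ z, (z : ℂ) ^ (n t + j) ∂ν) l (𝓝 (a * ∫ z, (z : ℂ) ^ j ∂ν)) := by
  have hcoeff (t : ι) :
      ∫ z, (z : ℂ) ^ (n t + j) ∂ν = inner ℂ ((U ^ n t) ((U ^ j) ξ)) ξ := by
    rw [hξ, zpow_add]
    rfl
  simpa only [hcoeff, hξ j] using hU ((U ^ j) ξ) ξ

theorem mutually_singular_of_different_weak_limits_general
    {H₁ H₂ : Type*} [NormedAddCommGroup H₁] [InnerProductSpace ℂ H₁]
    [NormedAddCommGroup H₂] [InnerProductSpace ℂ H₂]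
    (U : H₁ ≃ₗᵢ[ℂ] H₁) (V : H₂ ≃ₗᵢ[ℂ] H₂)
    (n : ℕ → ℤ) (a b : ℂ) (hab : a ≠ b)
    (hU : ∀ ξ η : H₁, Tendsto (fun t => (inner ℂ ((U ^ n t) ξ) η : ℂ)) atTop
      (nhds (a * (inner ℂ ξ η : ℂ))))
    (hV : ∀ ξ η : H₂, Tendsto (fun t => (inner ℂ ((V ^ n t) ξ) η : ℂ)) atTop
      (nhds (b * (inner ℂ ξ η : ℂ))))
    (νU νV : Measure Circle) [IsFiniteMeasure νU] [IsFiniteMeasure νV]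
    (hνU : IsMaximalSpectralType U νU) (hνV : IsMaximalSpectralType V νV) :
    νU ⟂ₘ νV := by
  obtain ⟨⟨ξ, hξ⟩, -⟩ := hνU
  obtain ⟨⟨η, hη⟩, -⟩ := hνV
  exact Circle.mutuallySingular_of_tendsto_integral_zpow hab
    (hξ.tendsto_integral_zpow_add hU) (hη.tendsto_integral_zpow_add hV)

/-- If `U^{n_t} → a·I` and `V^{n_t} → b·I` in the weak operator
topology along a common sequence `(n_t)` of integers, with `a ≠ b`, then the measures
of maximal spectral type of `U` and `V` are mutually singular. -/
theorem mutually_singular_of_different_weak_limits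
    {H₁ H₂ : Type*} [NormedAddCommGroup H₁] [InnerProductSpace ℂ H₁] [CompleteSpace H₁]
    [NormedAddCommGroup H₂] [InnerProductSpace ℂ H₂] [CompleteSpace H₂]
    (U : H₁ ≃ₗᵢ[ℂ] H₁) (V : H₂ ≃ₗᵢ[ℂ] H₂)
    (n : ℕ → ℤ) (a b : ℂ) (hab : a ≠ b)
    (hU : ∀ ξ η : H₁, Tendsto (fun t => (inner ℂ ((U ^ n t) ξ) η : ℂ)) atTop
      (nhds (a * (inner ℂ ξ η : ℂ))))
    (hV : ∀ ξ η : H₂, Tendsto (fun t => (inner ℂ ((V ^ n t) ξ) η : ℂ)) atTop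
      (nhds (b * (inner ℂ ξ η : ℂ))))
    (νU νV : Measure Circle) [IsFiniteMeasure νU] [IsFiniteMeasure νV]
    (hνU : IsMaximalSpectralType U νU) (hνV : IsMaximalSpectralType V νV) :
    νU ⟂ₘ νV :=
  mutually_singular_of_different_weak_limits_general U V n a b hab hU hV νU νV hνU hνV
end
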